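/- arXiv:1602.03963 — 6 statements merged into one kernel-verified Lean document; each statement's English description precedes it below -/
import Mathlib

section
/- Assume the interaction graph G = (V, I) is acyclic. Then for every pair {i,j} ∈ E, the influence satisfies w_{{i,j}} = |Pr(y = +1 | x_i = +1, x_j = +1) − Pr(y = +1 | x_i = +1, x_j = −1)|. -/
open Finset

/-- The sigmoid function `σ(t) = eᵗ/(1+eᵗ)`. -/
noncomputable def sigmoid (t : ℝ) : ℝ := Real.exp t / (1 + Real.exp t)

/-- Interpretation of a Boolean as `±1 ∈ ℝ`. -/
def pm (b : Bool) : ℝ := if b then 1 else -1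

/-- `Σ_{{i,j}∈E} β_{{i,j}} x_i x_j`, summed over unordered pairs of distinct indices. -/
noncomputable def fld (d : ℕ) (β : Fin d → Fin d → ℝ) (x : Fin d → Bool) : ℝ :=
  ∑ i : Fin d, ∑ j ∈ Finset.Ioi i, β i j * pm (x i) * pm (x j)

/-- `Pr(y = s·(+1) | x_V ∈ A)`.  Since the covariates are i.i.d. uniform on `{−1,+1}`
and `Pr(y = s | x_V = x) = σ(s · Σ β x_i x_j)`, this conditional probability equals
`(Σ_{x∈A} σ(s · fld x)) / |A|`. -/
noncomputable def condProbY (d : ℕ) (β : Fin d → Fin d → ℝ) (s : ℝ)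
    (A : Finset (Fin d → Bool)) : ℝ :=
  (∑ x ∈ A, sigmoid (s * fld d β x)) / A.card

open scoped Classical in
/-- The influence `w_e = |2·Pr(y = +1 | x_i = +1, x_j = +1) − 1|` for `e = {i,j}`. -/
noncomputable def wgt (d : ℕ) (β : Fin d → Fin d → ℝ) (e : Sym2 (Fin d)) : ℝ :=
  |2 * condProbY d β 1 (Finset.univ.filter (fun x => ∀ v ∈ e, x v = true)) - 1|

/-- The interaction graph `G = (V, I)` with `I = {{i,j} : β_{{i,j}} ≠ 0}`. -/
def interGraph (d : ℕ) (β : Fin d → Fin d → ℝ) : SimpleGraph (Fin d) :=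
  SimpleGraph.fromRel (fun i j => β i j ≠ 0)

/-!
An acyclic interaction graph is bipartite, so there is a proper two-colouring `c` with
`c i = false`. Flipping the spins on one colour class negates every interaction term, hence the
field, while fixing `x_i`; since `σ(−t) = 1 − σ(t)`, this reflection shows
`Pr(y = +1 | x_i = +1) = 1/2`. The event `x_i = +1` splits into the two equally likely events
`x_j = ±1`, so `Pr(y = +1 | x_i = +1, x_j = −1) = 1 − Pr(y = +1 | x_i = +1, x_j = +1)`, which
turns the influence `|2p − 1|` into the claimed difference.
-/

lemma sigmoid_eq_real_sigmoid : sigmoid = Real.sigmoid := by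
  funext t
  rw [sigmoid, Real.sigmoid_def, Real.exp_neg]
  field_simp
  ring

lemma sigmoid_neg (t : ℝ) : sigmoid (-t) = 1 - sigmoid t := by
  simp only [sigmoid_eq_real_sigmoid, Real.sigmoid_neg]

lemma pm_xor (a b : Bool) : pm (xor a b) = -(pm a * pm b) := by
  cases a <;> cases b <;> simp [pm]

lemma pm_mul_pm_of_ne {a b : Bool} (h : a ≠ b) : pm a * pm b = -1 := by
  cases a <;> cases b <;> simp_all [pm]

lemma two_mul_sum_eq_card_of_involution {α : Type*} {s : Finset α} {f : α → ℝ}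
    (τ : α → α) (hτs : ∀ x ∈ s, τ x ∈ s) (hτ : ∀ x ∈ s, τ (τ x) = x)
    (hf : ∀ x ∈ s, f (τ x) = 1 - f x) :
    2 * ∑ x ∈ s, f x = #s := by
  have hperm : ∑ x ∈ s, f (τ x) = ∑ x ∈ s, f x :=
    Finset.sum_nbij' τ τ hτs hτs hτ hτ fun _ _ => rfl
  rw [Finset.sum_congr rfl hf, Finset.sum_sub_distrib, Finset.sum_const, nsmul_one] at hperm
  linarith

lemma SimpleGraph.IsAcyclic.exists_coloring_bool {V : Type*} {G : SimpleGraph V}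
    (hG : G.IsAcyclic) (i : V) : ∃ c : G.Coloring Bool, c i = false := by
  let c := G.recolorOfEquiv finTwoEquiv hG.coloringTwo
  refine ⟨SimpleGraph.Coloring.mk (fun v => xor (c v) (c i)) fun huv => ?_,
    Bool.xor_self _⟩
  simpa using c.valid huv

lemma fld_xor_coloring (d : ℕ) (β : Fin d → Fin d → ℝ)
    (c : (interGraph d β).Coloring Bool) (x : Fin d → Bool) :
    fld d β (fun v => xor (x v) (c v)) = -fld d β x := by
  simp only [fld, ← Finset.sum_neg_distrib]
  refine Finset.sum_congr rfl fun a _ => Finset.sum_congr rfl fun b hb => ?_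
  by_cases hβ : β a b = 0
  · simp [hβ]
  · have hadj : (interGraph d β).Adj a b := ⟨(Finset.mem_Ioi.mp hb).ne, Or.inl hβ⟩
    rw [pm_xor, pm_xor]
    linear_combination β a b * pm (x a) * pm (x b) * pm_mul_pm_of_ne (c.valid hadj)

lemma two_mul_sum_sigmoid_fld_eq_card (d : ℕ) (β : Fin d → Fin d → ℝ)
    (hacyc : (interGraph d β).IsAcyclic) (i : Fin d) :
    2 * ∑ x ∈ univ.filter (fun x : Fin d → Bool => x i = true), sigmoid (fld d β x) =
      #(univ.filter fun x : Fin d → Bool => x i = true) := by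
  obtain ⟨c, hci⟩ := hacyc.exists_coloring_bool i
  refine two_mul_sum_eq_card_of_involution (fun x v => xor (x v) (c v)) ?_ ?_ ?_
  · intro x hx
    simpa [hci] using hx
  · intro x _
    simp
  · intro x _
    rw [fld_xor_coloring, sigmoid_neg]

lemma card_filter_eq_true_eq_card_filter_eq_false {d : ℕ} {i j : Fin d} (hij : i ≠ j) :
    #(univ.filter fun x : Fin d → Bool => x i = true ∧ x j = true) =
      #(univ.filter fun x : Fin d → Bool => x i = true ∧ x j = false) := by
  let flip (x : Fin d → Bool) : Fin d → Bool := Function.update x j (!x j)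
  have hflip : ∀ x, flip (flip x) = x := fun x => by simp [flip]
  refine Finset.card_nbij' flip flip ?_ ?_ (fun x _ => hflip x) (fun x _ => hflip x)
  all_goals
    intro x hx
    simp_all [flip]

lemma sum_filter_div_card_add_sum_filter_not_div_card {α : Type*} {s : Finset α} {f : α → ℝ}
    (p : α → Prop) [DecidablePred p] (hf : 2 * ∑ x ∈ s, f x = #s)
    (hcard : #(s.filter p) = #(s.filter fun x => ¬p x)) (hne : (s.filter p).Nonempty) :
    (∑ x ∈ s.filter p, f x) / #(s.filter p) +
      (∑ x ∈ s.filter (fun x => ¬p x), f x) / #(s.filter fun x => ¬p x) = 1 := by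
  have hpos : (0 : ℝ) < #(s.filter p) := by exact_mod_cast hne.card_pos
  rw [← Finset.sum_filter_add_sum_filter_not s p, ← Finset.card_filter_add_card_filter_not p,
    ← hcard] at hf
  rw [← hcard, ← add_div, div_eq_one_iff_eq hpos.ne']
  push_cast at hf
  linarith

lemma condProbY_true_add_condProbY_false (d : ℕ) (β : Fin d → Fin d → ℝ)
    (hacyc : (interGraph d β).IsAcyclic) {i j : Fin d} (hij : i ≠ j) :
    condProbY d β 1 (univ.filter fun x => x i = true ∧ x j = true) +
      condProbY d β 1 (univ.filter fun x => x i = true ∧ x j = false) = 1 := by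
  set C := univ.filter fun x : Fin d → Bool => x i = true
  have hA : (univ.filter fun x : Fin d → Bool => x i = true ∧ x j = true) =
      C.filter fun x => x j = true := by
    ext x; simp [C]
  have hB : (univ.filter fun x : Fin d → Bool => x i = true ∧ x j = false) =
      C.filter fun x => ¬x j = true := by
    ext x; simp [C]
  have hcard := card_filter_eq_true_eq_card_filter_eq_false hij
  rw [hA, hB] at hcard ⊢
  simp only [condProbY, one_mul]
  refine sum_filter_div_card_add_sum_filter_not_div_card _
    (two_mul_sum_sigmoid_fld_eq_card d β hacyc i) hcard ⟨fun _ => true, ?_⟩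
  simp [C]

theorem statement0_general (d : ℕ) (β : Fin d → Fin d → ℝ)
    (hacyc : (interGraph d β).IsAcyclic)
    (i j : Fin d) (hij : i ≠ j) :
    wgt d β s(i, j) =
      |condProbY d β 1 (Finset.univ.filter (fun x => x i = true ∧ x j = true)) -
        condProbY d β 1 (Finset.univ.filter (fun x => x i = true ∧ x j = false))| := by
  have hpair : (univ.filter fun x : Fin d → Bool => ∀ v ∈ s(i, j), x v = true) =
      univ.filter fun x => x i = true ∧ x j = true := by
    ext x; simp
  rw [wgt, hpair, ← sub_eq_of_eq_add' (condProbY_true_add_condProbY_false d β hacyc hij).symm]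
  congr 1
  ring

/-- Proposition 1, Influence: if the interaction graph is acyclic, then
`w_{{i,j}} = |Pr(y=+1|x_i=+1,x_j=+1) − Pr(y=+1|x_i=+1,x_j=−1)|` for every pair `{i,j} ∈ E`. -/
theorem statement0 (d : ℕ) (hd : 2 ≤ d) (β : Fin d → Fin d → ℝ)
    (hsymm : ∀ i j, β i j = β j i)
    (hacyc : (interGraph d β).IsAcyclic)
    (i j : Fin d) (hij : i ≠ j) :
    wgt d β s(i, j) =
      |condProbY d β 1 (Finset.univ.filter (fun x => x i = true ∧ x j = true)) -
        condProbY d β 1 (Finset.univ.filter (fun x => x i = true ∧ x j = false))| :=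
  statement0_general d β hacyc i j hij
end

section
/- Assume that each connected component of the interaction graph G = (V, I) is a star (a tree in which at most one vertex has degree greater than one). Then for any two distinct i, j ∈ V, we have {i,j} ∈ I if and only if w_{{i,j}} > 0. -/
open Finset

/-- Each connected component of `G` is a star: `G` is acyclic (each component is a tree) and
in each component at most one vertex has degree greater than one. -/
def IsUnionOfStars {V : Type*} (G : SimpleGraph V) : Prop :=
  G.IsAcyclic ∧ ∀ u v : V, G.Reachable u v →
    1 < (G.neighborSet u).ncard → 1 < (G.neighborSet v).ncard → u = v

lemma sum_two_mul_sigmoid_sub_one_eq_zero_iff {α : Type*} {A : Finset α} (hA : A.Nonempty)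
    {φ : α → α} (hφ : ∀ x ∈ A, φ x ∈ A) (hφφ : ∀ x ∈ A, φ (φ x) = x) {f : α → ℝ} {c : ℝ}
    (hf : ∀ x ∈ A, f (φ x) = 2 * c - f x) :
    ∑ x ∈ A, (2 * Real.sigmoid (f x) - 1) = 0 ↔ c = 0 := by
  have hpair : ∑ x ∈ A, (2 * Real.sigmoid (f x) - 1)
      = ∑ x ∈ A, (Real.sigmoid (f x) - Real.sigmoid (f x - 2 * c)) := by
    have hreindex : ∑ x ∈ A, Real.sigmoid (-f x) = ∑ x ∈ A, Real.sigmoid (f x - 2 * c) :=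
      calc ∑ x ∈ A, Real.sigmoid (-f x) = ∑ x ∈ A, Real.sigmoid (-f (φ x)) :=
            (Finset.sum_nbij' φ φ hφ hφ hφφ hφφ fun _ _ => rfl).symm
        _ = ∑ x ∈ A, Real.sigmoid (f x - 2 * c) :=
            Finset.sum_congr rfl fun x hx => by rw [hf x hx]; ring_nf
    calc ∑ x ∈ A, (2 * Real.sigmoid (f x) - 1)
        = ∑ x ∈ A, (Real.sigmoid (f x) - Real.sigmoid (-f x)) :=
          Finset.sum_congr rfl fun x _ => by rw [Real.sigmoid_neg]; ring
      _ = _ := by rw [Finset.sum_sub_distrib, Finset.sum_sub_distrib, hreindex]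
  rw [hpair]
  refine ⟨fun hsum => ?_, fun hc => by simp [hc]⟩
  rcases lt_trichotomy c 0 with hc | hc | hc
  · refine absurd hsum (Finset.sum_neg (fun x _ => ?_) hA).ne
    exact sub_neg.mpr (Real.sigmoid_lt (by linarith))
  · exact hc
  · refine absurd hsum (Finset.sum_pos (fun x _ => ?_) hA).ne'
    exact sub_pos.mpr (Real.sigmoid_lt (by linarith))

lemma two_mul_condProbY_one_sub_one (d : ℕ) (β : Fin d → Fin d → ℝ)
    {A : Finset (Fin d → Bool)} (hA : A.Nonempty) :
    2 * condProbY d β 1 A - 1 = (∑ x ∈ A, (2 * Real.sigmoid (fld d β x) - 1)) / A.card := by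
  have hcard : (A.card : ℝ) ≠ 0 := by exact_mod_cast hA.card_pos.ne'
  rw [condProbY, Finset.sum_sub_distrib, ← Finset.mul_sum, sigmoid_eq_real_sigmoid]
  field_simp
  simp

lemma pm_xor_mul_pm_xor_of_eq {a a' : Bool} (h : a = a') (b b' : Bool) :
    pm (xor a b) * pm (xor a' b') = pm b * pm b' := by
  subst h; cases a <;> cases b <;> cases b' <;> simp [pm]

lemma pm_xor_mul_pm_xor_of_ne {a a' : Bool} (h : a ≠ a') (b b' : Bool) :
    pm (xor a b) * pm (xor a' b') = -(pm b * pm b') := by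
  cases a <;> cases a' <;> cases b <;> cases b' <;> simp_all [pm]

lemma fld_xor_add_fld {d : ℕ} {β : Fin d → Fin d → ℝ} {i j : Fin d} (hij : i < j)
    {g : Fin d → Bool} (hgij : g i = g j)
    (hg : ∀ u v, u < v → β u v ≠ 0 → s(u, v) ≠ s(i, j) → g u ≠ g v) (x : Fin d → Bool) :
    fld d β (fun v => xor (g v) (x v)) + fld d β x = 2 * β i j * pm (x i) * pm (x j) := by
  have hterm : ∀ u, ∀ v ∈ Ioi u,
      β u v * pm (xor (g u) (x u)) * pm (xor (g v) (x v)) + β u v * pm (x u) * pm (x v)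
        = if u = i ∧ v = j then 2 * β i j * pm (x i) * pm (x j) else 0 := by
    intro u v hv
    split_ifs with huv
    · obtain ⟨rfl, rfl⟩ := huv
      rw [mul_assoc _ (pm _), pm_xor_mul_pm_xor_of_eq hgij]
      ring
    by_cases hβ : β u v = 0
    · simp [hβ]
    have hne : s(u, v) ≠ s(i, j) := by
      rw [Ne, Sym2.eq_iff]
      rintro (h | ⟨rfl, rfl⟩)
      · exact huv h
      · exact (Finset.mem_Ioi.mp hv).not_gt hij
    rw [mul_assoc _ (pm _), pm_xor_mul_pm_xor_of_ne (hg u v (Finset.mem_Ioi.mp hv) hβ hne)]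
    ring
  rw [fld, fld, ← Finset.sum_add_distrib, Finset.sum_eq_single i]
  · rw [← Finset.sum_add_distrib, Finset.sum_congr rfl (hterm i)]
    simp only [true_and]
    rw [Finset.sum_ite_eq', if_pos (Finset.mem_Ioi.mpr hij)]
  · intro u _ hu
    rw [← Finset.sum_add_distrib, Finset.sum_congr rfl (hterm u)]
    simp [hu]
  · exact fun h => absurd (Finset.mem_univ i) h

section Graph

open SimpleGraph

variable {V : Type*} {G : SimpleGraph V}

lemma SimpleGraph.Coloring.exists_eq_eq_of_reachable (c : G.Coloring Bool) {i j : V}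
    (h : G.Reachable i j → c i = c j) (b : Bool) : ∃ c' : G.Coloring Bool, c' i = b ∧ c' j = b := by
  classical
  let t : G.ConnectedComponent → Bool := fun C =>
    if C = G.connectedComponentMk i then xor (c i) b else xor (c j) b
  refine ⟨Coloring.mk (fun v => xor (c v) (t (G.connectedComponentMk v))) ?_, ?_, ?_⟩
  · intro u v huv
    rw [ConnectedComponent.sound huv.reachable]
    simpa using c.valid huv
  · show xor (c i) (t _) = b
    simp [t]
  · show xor (c j) (t _) = b
    by_cases hij : G.Reachable i j
    · simp [t, ConnectedComponent.sound hij, h hij]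
    · have hji : ¬G.Reachable j i := fun h => hij h.symm
      simp [t, ConnectedComponent.eq, hji]

lemma IsUnionOfStars.exists_adj_adj [Finite V] (hG : IsUnionOfStars G) {i j : V}
    (hr : G.Reachable i j) (hne : i ≠ j) (hnadj : ¬ G.Adj i j) : ∃ b, G.Adj i b ∧ G.Adj b j := by
  classical
  have hdeg : ∀ {v a a'}, G.Adj v a → G.Adj v a' → a ≠ a' → 1 < (G.neighborSet v).ncard :=
    fun ha ha' haa' => (Set.one_lt_ncard (Set.toFinite _)).mpr ⟨_, ha, _, ha', haa'⟩
  obtain ⟨p, hp⟩ : ∃ p : G.Walk i j, p.IsPath := ⟨_, hr.some.toPath.2⟩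
  match p, hp with
  | .nil, _ => exact absurd rfl hne
  | .cons h .nil, _ => exact absurd h hnadj
  | .cons h (.cons h' .nil), _ => exact ⟨_, h, h'⟩
  | .cons h (.cons h' (.cons h'' q)), hp =>
    -- the second and third vertices of the path both have two distinct neighbours on it
    have hnodup := hp.support_nodup
    have hq := q.start_mem_support
    simp only [Walk.support_cons, List.nodup_cons, List.mem_cons] at hnodup
    have hfirst : 1 < (G.neighborSet _).ncard := hdeg h.symm h' (by tauto)
    have hsecond : 1 < (G.neighborSet _).ncard := hdeg h'.symm h'' (by rintro rfl; tauto)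
    exact (G.ne_of_adj h' (hG.2 _ _ h'.reachable hfirst hsecond)).elim

lemma IsUnionOfStars.exists_coloring_deleteEdges [Finite V] (hG : IsUnionOfStars G) {i j : V}
    (hne : i ≠ j) (b : Bool) :
    ∃ c : (G.deleteEdges {s(i, j)}).Coloring Bool, c i = b ∧ c j = b := by
  set H := G.deleteEdges {s(i, j)}
  obtain ⟨c⟩ := (hG.1.anti (G.deleteEdges_le _)).colorable_two
  let c' := H.recolorOfEquiv finTwoEquiv c
  refine c'.exists_eq_eq_of_reachable (fun hr => ?_) b
  have hnadj : ¬ G.Adj i j := fun hadj => isAcyclic_iff_forall_adj_isBridge.mp hG.1 hadj hr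
  obtain ⟨k, hik, hkj⟩ := hG.exists_adj_adj (hr.mono (G.deleteEdges_le _)) hne hnadj
  have hH : ∀ {u v}, G.Adj u v → H.Adj u v := fun huv =>
    deleteEdges_adj.mpr ⟨huv, fun h => hnadj <| by
      rw [← mem_edgeSet, ← Set.mem_singleton_iff.mp h]
      exact huv⟩
  let p : H.Walk i j := .cons (hH hik) (.cons (hH hkj) .nil)
  exact Bool.eq_iff_iff.mpr ((c'.even_length_iff_congr p).mp (by simp [p]))

end Graph

theorem beta_ne_zero_iff_wgt_pos_of_lt {d : ℕ} {β : Fin d → Fin d → ℝ}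
    (hstar : IsUnionOfStars (interGraph d β)) {i j : Fin d} (hij : i < j) :
    β i j ≠ 0 ↔ 0 < wgt d β s(i, j) := by
  obtain ⟨g, hgi, hgj⟩ := hstar.exists_coloring_deleteEdges hij.ne false
  set A : Finset (Fin d → Bool) := Finset.univ.filter (fun x => ∀ v ∈ s(i, j), x v = true)
    with hA
  have hmem : ∀ x, x ∈ A ↔ x i = true ∧ x j = true := by simp [A]
  have hAne : A.Nonempty := ⟨fun _ => true, (hmem _).mpr ⟨rfl, rfl⟩⟩
  let φ : (Fin d → Bool) → (Fin d → Bool) := fun x v => xor (g v) (x v)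
  have hφ : ∀ x ∈ A, φ x ∈ A := fun x hx => by simp_all [φ]
  have hφφ : ∀ x ∈ A, φ (φ x) = x := fun x _ => by simp [φ]
  have hproper : ∀ u v, u < v → β u v ≠ 0 → s(u, v) ≠ s(i, j) → g u ≠ g v :=
    fun u v huv hβ hne => g.valid (SimpleGraph.deleteEdges_adj.mpr
      ⟨(SimpleGraph.fromRel_adj _ _ _).mpr ⟨huv.ne, Or.inl hβ⟩, hne⟩)
  have hfld : ∀ x ∈ A, fld d β (φ x) = 2 * β i j - fld d β x := fun x hx => by
    obtain ⟨hxi, hxj⟩ := (hmem x).mp hx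
    rw [eq_sub_iff_add_eq, fld_xor_add_fld hij (hgi.trans hgj.symm) hproper, hxi, hxj]
    simp [pm]
  have hcard : (A.card : ℝ) ≠ 0 := by exact_mod_cast hAne.card_pos.ne'
  rw [wgt, ← hA, two_mul_condProbY_one_sub_one d β hAne, abs_pos, div_ne_zero_iff,
    and_iff_left hcard]
  exact (sum_two_mul_sigmoid_sub_one_eq_zero_iff hAne hφ hφφ hfld).not.symm

theorem statement3_general (d : ℕ) (β : Fin d → Fin d → ℝ)
    (hsymm : ∀ i j, β i j = β j i)
    (hstar : IsUnionOfStars (interGraph d β))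
    (i j : Fin d) (hij : i ≠ j) :
    β i j ≠ 0 ↔ 0 < wgt d β s(i, j) := by
  rcases hij.lt_or_gt with hlt | hgt
  · exact beta_ne_zero_iff_wgt_pos_of_lt hstar hlt
  · rw [hsymm, Sym2.eq_swap]
    exact beta_ne_zero_iff_wgt_pos_of_lt hstar hgt

/-- Theorem 1, Union of stars: if each connected component of the
interaction graph is a star, then `{i,j} ∈ I` iff `w_{{i,j}} > 0`. -/
theorem statement3 (d : ℕ) (hd : 2 ≤ d) (β : Fin d → Fin d → ℝ)
    (hsymm : ∀ i j, β i j = β j i)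
    (hstar : IsUnionOfStars (interGraph d β))
    (i j : Fin d) (hij : i ≠ j) :
    β i j ≠ 0 ↔ 0 < wgt d β s(i, j) :=
  statement3_general d β hsymm hstar i j hij
end

section
/- Let V be a finite set with |V| ≥ 2, let E be the set of unordered pairs of distinct elements of V, let G = (V, I) be an acyclic simple graph with edge set I ⊆ E, and let D := {{i,j} ∈ E : i and j are disconnected in G}. Let u : E → ℝ be a weight assignment satisfying: (1) strict separation: there exists a real constant η ≥ 0 such that u_{{i,j}} > η ≥ u_{{k,l}} for every {i,j} ∈ I and every {k,l} ∈ D; and (2) local dominance: u_{{i_1,i_{m+1}}} < u_{{i_s,i_{s+1}}} for every path {{i_1,i_2},{i_2,i_3},…,{i_m,i_{m+1}}} of length m ≥ 2 in G and every s ∈ {1,…,m}. Then for every maximum-weight spanning tree T (of the complete graph on V) with respect to u, one has I = T ∩ W, where W := {{i,j} ∈ E : u_{{i,j}} > η}. -/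
open Finset

/-- `T` is a spanning tree of the complete graph on `V`: a set of `|V| − 1` non-loop edges
forming a connected acyclic graph on `V`. -/
def IsSpanningTree {V : Type*} [Fintype V] (T : Finset (Sym2 V)) : Prop :=
  T.card = Fintype.card V - 1 ∧ (∀ e ∈ T, ¬ e.IsDiag) ∧
    (SimpleGraph.fromEdgeSet (T : Set (Sym2 V))).Connected ∧
    (SimpleGraph.fromEdgeSet (T : Set (Sym2 V))).IsAcyclic

/-- `T` is a maximum-weight spanning tree of the complete graph on `V` with respect to the
weight assignment `u`. -/
def IsMaxSpanningTree {V : Type*} [Fintype V] (u : Sym2 V → ℝ) (T : Finset (Sym2 V)) : Prop :=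
  IsSpanningTree T ∧ ∀ T' : Finset (Sym2 V), IsSpanningTree T' → ∑ e ∈ T', u e ≤ ∑ e ∈ T, u e

/-!
Both inclusions are exchange arguments. If `f ∈ T` and `x, y` lie in different components of
`T - f`, then `T - f + xy` is again a spanning tree, so maximality gives `u xy ≤ u f`.

If `ij` is an edge of `G` outside `T`, every edge of the tree path from `i` to `j` has weight
`≥ u ij > η`, so by strict separation its endpoints are joined in `G`. Since `ij` is a bridge of
the forest `G`, some such edge `ab` crosses the cut of `G - ij`, so the `G`-path from `a` to `b`
passes through `ij`, and local dominance gives `u ab < u ij`.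

If `ij ∈ T` has `u ij > η`, strict separation gives a `G`-path from `i` to `j`. Were it longer
than one edge, its edge crossing the cut of `T - ij` would weigh `≤ u ij` by the exchange and
`> u ij` by local dominance.
-/

namespace SimpleGraph

variable {V : Type*} {G : SimpleGraph V}

theorem Walk.reachable_deleteEdges_or {v a : V} (p : G.Walk v a) (b : V) :
    (G.deleteEdges {s(a, b)}).Reachable v a ∨ (G.deleteEdges {s(a, b)}).Reachable v b := by
  induction p with
  | nil => exact .inl .rfl
  | @cons w x c h q ih =>
    by_cases hwx : s(w, x) = s(c, b)
    · rcases Sym2.eq_iff.mp hwx with ⟨rfl, -⟩ | ⟨rfl, -⟩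
      exacts [.inl .rfl, .inr .rfl]
    · have hadj : (G.deleteEdges {s(c, b)}).Adj w x := by simp [h, hwx]
      exact ih.imp hadj.reachable.trans hadj.reachable.trans

theorem Connected.connected_deleteEdges_sup_edge (hG : G.Connected) {a b x y : V}
    (hxy : ¬(G.deleteEdges {s(a, b)}).Reachable x y) :
    (G.deleteEdges {s(a, b)} ⊔ edge x y).Connected := by
  set K := G.deleteEdges {s(a, b)}
  have hside (v : V) : K.Reachable v a ∨ K.Reachable v b :=
    (hG.preconnected v a).some.reachable_deleteEdges_or b
  have hle : K ≤ K ⊔ edge x y := le_sup_left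
  have hxy' : (K ⊔ edge x y).Reachable x y :=
    Adj.reachable <| Or.inr <|
      (edge_adj _ _ _ _).2 ⟨.inl ⟨rfl, rfl⟩, by rintro rfl; exact hxy .rfl⟩
  have hab : (K ⊔ edge x y).Reachable a b := by
    rcases hside x with hx | hx <;> rcases hside y with hy | hy
    · exact absurd (hx.trans hy.symm) hxy
    · exact ((hx.mono hle).symm.trans hxy').trans (hy.mono hle)
    · exact ((hy.mono hle).symm.trans hxy'.symm).trans (hx.mono hle)
    · exact absurd (hx.trans hy.symm) hxy
  have := hG.nonempty
  refine (connected_iff_exists_forall_reachable _).2 ⟨a, fun v => ?_⟩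
  rcases hside v with hv | hv
  · exact (hv.mono hle).symm
  · exact hab.trans (hv.mono hle).symm

theorem IsAcyclic.not_reachable_deleteEdges_of_mem_edges (hG : G.IsAcyclic) {i j : V}
    {p : G.Walk i j} (hp : p.IsPath) {e : Sym2 V} (he : e ∈ p.edges) :
    ¬(G.deleteEdges {e}).Reachable i j := by
  classical
  induction e using Sym2.ind with | _ a b => ?_
  rw [reachable_deleteEdges_iff_exists_walk]
  rintro ⟨q, hq⟩
  have hpq : p = q.bypass :=
    congrArg Subtype.val ((hG.subsingleton_path i j).elim ⟨p, hp⟩ q.toPath)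
  exact hq (q.edges_bypass_subset_edges (hpq ▸ he))

def IsLocallyDominant {β : Type*} [LT β] (G : SimpleGraph V) (u : Sym2 V → β) : Prop :=
  ∀ m : ℕ, 2 ≤ m → ∀ p : Fin (m + 1) → V, Function.Injective p →
    (∀ k : Fin m, G.Adj (p k.castSucc) (p k.succ)) →
    ∀ t : Fin m, u s(p 0, p (Fin.last m)) < u s(p t.castSucc, p t.succ)

theorem IsLocallyDominant.lt_of_mem_edges {β : Type*} [LT β] {u : Sym2 V → β}
    (hdom : G.IsLocallyDominant u) {x y : V} {q : G.Walk x y} (hq : q.IsPath) {e : Sym2 V}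
    (he : e ∈ q.edges) (hne : e ≠ s(x, y)) : u s(x, y) < u e := by
  induction e using Sym2.ind with | _ a b => ?_
  obtain ⟨t, ht, hab⟩ := q.mk_mem_edges_iff_exists.1 he
  rw [← hab] at hne ⊢
  have hlen : 2 ≤ q.length := by
    by_contra! h
    obtain rfl : t = 0 := by omega
    exact hne (by rw [q.getVert_zero, q.getVert_of_length_le (by omega)])
  have hinj : Function.Injective fun k : Fin (q.length + 1) => q.getVert k :=
    fun k l hkl => Fin.ext (hq.getVert_injOn (by simp; omega) (by simp; omega) hkl)
  simpa using hdom q.length hlen _ hinj (fun k => q.adj_getVert_succ k.isLt) ⟨t, ht⟩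

end SimpleGraph

open SimpleGraph

section SpanningTree

variable {V : Type*} {T : Finset (Sym2 V)}

theorem notMem_erase_of_not_reachable_deleteEdges [DecidableEq V] {f : Sym2 V} {x y : V}
    (h : ¬((fromEdgeSet (T : Set (Sym2 V))).deleteEdges {f}).Reachable x y) :
    s(x, y) ∉ T.erase f := by
  refine fun hxy => h (Adj.reachable ?_)
  simp only [deleteEdges_adj, fromEdgeSet_adj, Set.mem_singleton_iff] at hxy ⊢
  exact ⟨⟨mem_of_mem_erase hxy, by rintro rfl; exact h .rfl⟩, ne_of_mem_erase hxy⟩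

theorem IsSpanningTree.exchange [Fintype V] [DecidableEq V] (hT : IsSpanningTree T)
    {f : Sym2 V} (hf : f ∈ T) {x y : V}
    (h : ¬((fromEdgeSet (T : Set (Sym2 V))).deleteEdges {f}).Reachable x y) :
    IsSpanningTree (insert s(x, y) (T.erase f)) := by
  obtain ⟨hcard, hdiag, hconn, hacyc⟩ := hT
  have hxy : x ≠ y := by rintro rfl; exact h .rfl
  have hgraph : fromEdgeSet (↑(insert s(x, y) (T.erase f)) : Set (Sym2 V)) =
      (fromEdgeSet (T : Set (Sym2 V))).deleteEdges {f} ⊔ edge x y := by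
    ext v w
    simp only [fromEdgeSet_adj, coe_insert, coe_erase, Set.mem_insert_iff, Set.mem_sdiff,
      Set.mem_singleton_iff, sup_adj, deleteEdges_adj, edge_adj, mem_coe, Sym2.eq_iff]
    tauto
  refine ⟨?_, ?_, ?_, ?_⟩
  · rw [card_insert_of_notMem (notMem_erase_of_not_reachable_deleteEdges h),
      card_erase_of_mem hf, hcard]
    have := card_pos.2 ⟨f, hf⟩
    omega
  · simp only [mem_insert, mem_erase]
    rintro e (rfl | ⟨-, he⟩)
    exacts [by simpa using hxy, hdiag e he]
  · induction f using Sym2.ind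
    rw [hgraph]
    exact hconn.connected_deleteEdges_sup_edge h
  · rw [hgraph]
    exact (hacyc.anti (deleteEdges_le _)).sup_edge_of_not_reachable h

theorem IsMaxSpanningTree.weight_le_of_not_reachable_deleteEdges [Fintype V] [DecidableEq V]
    {u : Sym2 V → ℝ} (hT : IsMaxSpanningTree u T) {f : Sym2 V} (hf : f ∈ T) {x y : V}
    (h : ¬((fromEdgeSet (T : Set (Sym2 V))).deleteEdges {f}).Reachable x y) :
    u s(x, y) ≤ u f := by
  have hsum := hT.2 _ (hT.1.exchange hf h)
  rw [sum_insert (notMem_erase_of_not_reachable_deleteEdges h)] at hsum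
  have := add_sum_erase T u hf
  linarith

theorem IsMaxSpanningTree.mem_of_adj [Fintype V] {G : SimpleGraph V} {u : Sym2 V → ℝ} {η : ℝ}
    (hT : IsMaxSpanningTree u T) (hG : G.IsAcyclic) (hdom : G.IsLocallyDominant u)
    (hsep : ∀ i j : V, i ≠ j → ¬ G.Reachable i j → u s(i, j) ≤ η)
    {i j : V} (hij : G.Adj i j) (hη : η < u s(i, j)) : s(i, j) ∈ T := by
  classical
  obtain ⟨-, -, hTconn, hTacyc⟩ := hT.1
  by_contra heT
  obtain ⟨p, hp⟩ := hTconn.exists_isPath i j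
  have hbridge : ¬(G.deleteEdges {s(i, j)}).Reachable i j :=
    isAcyclic_iff_forall_adj_isBridge.mp hG hij
  obtain ⟨d, hd, hdi, hdj⟩ :=
    p.exists_boundary_dart {v | (G.deleteEdges {s(i, j)}).Reachable i v} .rfl hbridge
  have hdT : s(d.fst, d.snd) ∈ T := mem_coe.1 ((fromEdgeSet_adj _).1 d.adj).1
  have hle : u s(i, j) ≤ u s(d.fst, d.snd) :=
    hT.weight_le_of_not_reachable_deleteEdges hdT
      (hTacyc.not_reachable_deleteEdges_of_mem_edges hp
        (p.edges_eq_map_darts ▸ List.mem_map_of_mem hd))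
  have hreach : G.Reachable d.fst d.snd := by
    by_contra hn
    have := hsep _ _ d.adj.ne hn
    linarith
  obtain ⟨q, hq⟩ := hreach.exists_isPath
  have hmem : s(i, j) ∈ q.edges := by
    by_contra hn
    exact hdj (hdi.trans (reachable_deleteEdges_iff_exists_walk.2 ⟨q, hn⟩))
  have hlt := hdom.lt_of_mem_edges hq hmem (fun h => heT (h ▸ hdT))
  linarith

theorem IsMaxSpanningTree.adj_of_mem [Fintype V] {G : SimpleGraph V} {u : Sym2 V → ℝ} {η : ℝ}
    (hT : IsMaxSpanningTree u T) (hdom : G.IsLocallyDominant u)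
    (hsep : ∀ i j : V, i ≠ j → ¬ G.Reachable i j → u s(i, j) ≤ η)
    {i j : V} (he : s(i, j) ∈ T) (hη : η < u s(i, j)) : G.Adj i j := by
  classical
  obtain ⟨-, hTdiag, -, hTacyc⟩ := hT.1
  have hij : i ≠ j := by simpa using hTdiag _ he
  have hreach : G.Reachable i j := by
    by_contra hn
    have := hsep i j hij hn
    linarith
  by_contra hnadj
  obtain ⟨q, hq⟩ := hreach.exists_isPath
  have hbridge : ¬((fromEdgeSet (T : Set (Sym2 V))).deleteEdges {s(i, j)}).Reachable i j :=
    isAcyclic_iff_forall_adj_isBridge.mp hTacyc (by simpa [fromEdgeSet_adj] using ⟨he, hij⟩)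
  obtain ⟨d, hd, hdi, hdj⟩ := q.exists_boundary_dart
    {v | ((fromEdgeSet (T : Set (Sym2 V))).deleteEdges {s(i, j)}).Reachable i v} .rfl hbridge
  have hle := hT.weight_le_of_not_reachable_deleteEdges he (fun h => hdj (hdi.trans h))
  have hlt := hdom.lt_of_mem_edges hq (q.edges_eq_map_darts ▸ List.mem_map_of_mem hd)
    (fun h => hnadj (G.mem_edgeSet.1 (h ▸ d.edge_mem)))
  exact hle.not_gt hlt

end SpanningTree

theorem statement5_general {V : Type*} [Fintype V]
    (G : SimpleGraph V) (hacyc : G.IsAcyclic)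
    (u : Sym2 V → ℝ) (η : ℝ)
    (hsep₁ : ∀ i j : V, G.Adj i j → η < u s(i, j))
    (hsep₂ : ∀ i j : V, i ≠ j → ¬ G.Reachable i j → u s(i, j) ≤ η)
    (hdom : ∀ m : ℕ, 2 ≤ m → ∀ p : Fin (m + 1) → V, Function.Injective p →
      (∀ k : Fin m, G.Adj (p k.castSucc) (p k.succ)) →
      ∀ t : Fin m, u s(p 0, p (Fin.last m)) < u s(p t.castSucc, p t.succ))
    (T : Finset (Sym2 V)) (hT : IsMaxSpanningTree u T) :
    ∀ e : Sym2 V, e ∈ G.edgeSet ↔ e ∈ T ∧ η < u e := by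
  intro e
  induction e using Sym2.ind with | _ i j => ?_
  rw [mem_edgeSet]
  exact ⟨fun hij => ⟨hT.mem_of_adj hacyc hdom hsep₂ hij (hsep₁ i j hij), hsep₁ i j hij⟩,
    fun ⟨he, hη⟩ => hT.adj_of_mem hdom hsep₂ he hη⟩

/-- Proposition 5: let `G` be an acyclic graph on a finite vertex set `V`
with `|V| ≥ 2` and let `u` be a weight assignment on the unordered pairs satisfying strict
separation (edges of `G` have weight `> η`, pairs of disconnected vertices have weight `≤ η`,
for some `η ≥ 0`) and local dominance (along any path of length `m ≥ 2` in `G`, the weight of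
the pair of endpoints is smaller than the weight of each edge on the path).  Then for every
maximum-weight spanning tree `T` with respect to `u` we have `I = T ∩ W`, where
`W = {e : u e > η}`. -/
theorem statement5 {V : Type*} [Fintype V] [DecidableEq V] (hV : 2 ≤ Fintype.card V)
    (G : SimpleGraph V) (hacyc : G.IsAcyclic)
    (u : Sym2 V → ℝ) (η : ℝ) (hη : 0 ≤ η)
    (hsep₁ : ∀ i j : V, G.Adj i j → η < u s(i, j))
    (hsep₂ : ∀ i j : V, i ≠ j → ¬ G.Reachable i j → u s(i, j) ≤ η)
    (hdom : ∀ m : ℕ, 2 ≤ m → ∀ p : Fin (m + 1) → V, Function.Injective p →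
      (∀ k : Fin m, G.Adj (p k.castSucc) (p k.succ)) →
      ∀ t : Fin m, u s(p 0, p (Fin.last m)) < u s(p t.castSucc, p t.succ))
    (T : Finset (Sym2 V)) (hT : IsMaxSpanningTree u T) :
    ∀ e : Sym2 V, e ∈ G.edgeSet ↔ e ∈ T ∧ η < u e :=
  statement5_general G hacyc u η hsep₁ hsep₂ hdom T hT
end

section
/- For every positive integer q, the central binomial coefficient satisfies 2^{−q} · C(q, ⌊q/2⌋) ≥ sqrt(2/(π(q+2))). -/
open Real

lemma key_wallis (n : ℕ) :
    2 * 2 ^ (4 * n) ≤ π * (Nat.centralBinom n : ℝ) ^ 2 * (2 * n + 1) := by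
  have h := Real.Wallis.W_le n
  rw [Real.Wallis.W_eq_factorial_ratio] at h
  have hfact : ((2 * n).factorial : ℝ) =
      (Nat.centralBinom n : ℝ) * (n.factorial * n.factorial) := by
    have := Nat.choose_mul_factorial_mul_factorial (Nat.le_mul_of_pos_left n (by norm_num : 0 < 2))
    have h2 : 2 * n - n = n := by omega
    rw [h2] at this
    rw [Nat.centralBinom]
    push_cast [← this]
    ring
  have hd : (0 : ℝ) < ((2 * n).factorial : ℝ) ^ 2 * (2 * n + 1) := by positivity
  rw [div_le_iff₀ hd, hfact] at h
  have hf : (0 : ℝ) < (n.factorial : ℝ) := by positivity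
  have h4 : (0 : ℝ) < (n.factorial : ℝ) ^ 4 := by positivity
  refine le_of_mul_le_mul_right ?_ h4
  calc 2 * 2 ^ (4 * n) * (n.factorial : ℝ) ^ 4
      = 2 * (2 ^ (4 * n) * (n.factorial : ℝ) ^ 4) := by ring
    _ ≤ 2 * (π / 2 * (((Nat.centralBinom n : ℝ) * (n.factorial * n.factorial)) ^ 2 * (2 * n + 1))) := by linarith
    _ = π * (Nat.centralBinom n : ℝ) ^ 2 * (2 * n + 1) * (n.factorial : ℝ) ^ 4 := by ring

lemma centralBinom_succ_eq (n : ℕ) :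
    Nat.centralBinom (n + 1) = 2 * (2 * n + 1).choose n := by
  rw [Nat.centralBinom]
  have : 2 * (n + 1) = (2 * n + 1) + 1 := by ring
  rw [this, Nat.choose_succ_succ', Nat.choose_symm_half]
  omega

/-- for every positive integer `q`, the central binomial coefficient
satisfies `2^{−q}·C(q, ⌊q/2⌋) ≥ sqrt(2/(π(q+2)))`. -/
theorem statement16 (q : ℕ) (hq : 0 < q) :
    Real.sqrt (2 / (Real.pi * (q + 2))) ≤ (q.choose (q / 2) : ℝ) / 2 ^ q := by
  have hB : (0 : ℝ) ≤ (q.choose (q / 2) : ℝ) / 2 ^ q := by positivity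
  rw [show (q.choose (q / 2) : ℝ) / 2 ^ q
      = Real.sqrt (((q.choose (q / 2) : ℝ) / 2 ^ q) ^ 2) from (Real.sqrt_sq hB).symm]
  apply Real.sqrt_le_sqrt
  rw [div_pow, div_le_div_iff₀ (by positivity) (by positivity)]
  -- goal : 2 * ((2:ℝ)^q)^2 ≤ (choose)^2 * (π * (q+2))
  rcases Nat.even_or_odd q with ⟨n, hn⟩ | ⟨n, hn⟩
  · subst hn
    have hc : (n + n).choose ((n + n) / 2) = Nat.centralBinom n := by
      rw [Nat.centralBinom]; congr 1 <;> omega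
    rw [hc]
    have hkey := key_wallis n
    have hpow : ((2 : ℝ) ^ (n + n)) ^ 2 = 2 ^ (4 * n) := by
      rw [← pow_mul]; congr 1; omega
    rw [hpow]
    have hpi := Real.pi_pos
    have hC : (0 : ℝ) ≤ (Nat.centralBinom n : ℝ) ^ 2 := by positivity
    have hcast : ((n + n : ℕ) : ℝ) = 2 * n := by push_cast; ring
    rw [hcast]
    nlinarith [mul_nonneg hpi.le hC]
  · subst hn
    have hc2 : Nat.centralBinom (n + 1) = 2 * (2 * n + 1).choose ((2 * n + 1) / 2) := by
      rw [show (2 * n + 1) / 2 = n from by omega, centralBinom_succ_eq]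
    have hkey := key_wallis (n + 1)
    rw [hc2] at hkey
    have hpow : (2 : ℝ) ^ (4 * (n + 1)) = 4 * ((2 : ℝ) ^ (2 * n + 1)) ^ 2 := by
      rw [← pow_mul]; ring_nf
    rw [hpow] at hkey
    push_cast at hkey ⊢
    nlinarith [hkey]
end

section
/- Assume the interaction graph G = (V, I) is acyclic and that {{i_1,i_2},{i_2,i_3},…,{i_m,i_{m+1}}} is a path of length m ≥ 3 in G (all edges in I, vertices i_1,…,i_{m+1} distinct), and fix s ∈ {2,…,m−1}. Then: (a) 2^{d−2}·[Pr(y = +1 | x_{i_s} = +1, x_{i_{s+1}} = +1) − Pr(y = +1 | x_{i_1} = +1, x_{i_{m+1}} = +1)] = Σ_{x : (x_{i_1}, x_{i_s}, x_{i_{s+1}}, x_{i_{m+1}}) = (+1,+1,+1,−1)} ζ_{{i_s,i_{s+1}}}(x) + Σ_{x : (x_{i_1}, x_{i_s}, x_{i_{s+1}}, x_{i_{m+1}}) = (−1,+1,+1,+1)} ζ_{{i_s,i_{s+1}}}(x); and (b) if moreover m is odd, then 2^{d−2}·[Pr(y = +1 | x_{i_s} = +1, x_{i_{s+1}} = +1)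 − Pr(y = −1 | x_{i_1} = +1, x_{i_{m+1}} = +1)] = Σ_{x : (x_{i_1}, x_{i_s}, x_{i_{s+1}}, x_{i_{m+1}}) = (+1,+1,+1,+1)} ζ_{{i_s,i_{s+1}}}(x) + Σ_{x : (x_{i_1}, x_{i_s}, x_{i_{s+1}}, x_{i_{m+1}}) = (−1,+1,+1,−1)} ζ_{{i_s,i_{s+1}}}(x). -/
/-!
Write `u, v` for the endpoints of the edge `{i_s, i_{s+1}}` and `z, w` for the ends
`i_1, i_{m+1}` of the path.
Deleting the edge `uv` from the forest separates `z, u` from `v, w`, so changing all signs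
on either side preserves `S = S_{uv}` and only changes the sign of `x_u x_v` in
`Σ β x_i x_j = β_{uv} x_u x_v + S`. These flips carry every class of sign patterns on
`(z, u, v, w)` to one with `x_u = x_v = +1`, after which the two conditional probabilities
differ exactly by the `ζ`-terms. For (b), a proper 2-colouring of the forest gives a flip
that negates the whole field; when `m` is odd it colours `z` and `w` differently, which
turns `Pr(y = −1 | x_z = x_w = +1)` into the average of `σ` of the field over
`x_z = +1, x_w = −1`.
-/

open Finset

/-- `S_{{i,j}}(x) = Σ_{{k,l} ∈ E, {k,l} ≠ {i,j}} β_{{k,l}} x_k x_l`. -/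
noncomputable def Sfun (d : ℕ) (β : Fin d → Fin d → ℝ) (i j : Fin d) (x : Fin d → Bool) : ℝ :=
  ∑ k : Fin d, ∑ l ∈ Finset.Ioi k,
    if s(k, l) = s(i, j) then 0 else β k l * pm (x k) * pm (x l)

/-- `ζ_{{i,j}}(x) = σ(β_{{i,j}} + S_{{i,j}}(x)) − σ(−β_{{i,j}} + S_{{i,j}}(x))`. -/
noncomputable def zeta (d : ℕ) (β : Fin d → Fin d → ℝ) (i j : Fin d) (x : Fin d → Bool) : ℝ :=
  sigmoid (β i j + Sfun d β i j x) - sigmoid (-(β i j) + Sfun d β i j x)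

lemma pm_beq (a b : Bool) : pm (a == b) = pm a * pm b := by
  cases a <;> cases b <;> norm_num [pm]

lemma pm_mul_pm_of_eq {a b : Bool} (h : a = b) : pm a * pm b = 1 := by
  subst h; cases a <;> norm_num [pm]

lemma beq_eq_iff_eq_beq (x a b : Bool) : (x == b) = a ↔ x = (a == b) := by
  cases x <;> cases a <;> cases b <;> decide

lemma beq_ne_beq {a b : Bool} (h : a ≠ b) (e : Bool) : (a == e) ≠ (b == e) := by
  cases a <;> cases b <;> cases e <;> simp_all

section SignMul

variable {ι : Type*}

def signMul (g x : ι → Bool) : ι → Bool := fun i => x i == g i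

lemma pm_signMul (g x : ι → Bool) (i : ι) : pm (signMul g x i) = pm (x i) * pm (g i) :=
  pm_beq _ _

lemma signMul_involutive (g : ι → Bool) : Function.Involutive (signMul g) := by
  intro x
  funext i
  simp only [signMul]
  cases x i <;> cases g i <;> rfl

lemma sum_filter_eq_sum_filter_signMul [DecidableEq ι] [Fintype ι] {M : Type*} [AddCommMonoid M]
    (g : ι → Bool) (P : (ι → Bool) → Prop) [DecidablePred P] (f : (ι → Bool) → M) :
    ∑ x ∈ univ.filter P, f x = ∑ x ∈ univ.filter (fun x => P (signMul g x)), f (signMul g x) := by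
  simp only [sum_filter]
  exact (Equiv.sum_comp (signMul_involutive g).toPerm _).symm

lemma sum_filter_split_apply {M : Type*} [AddCommMonoid M]
    (s : Finset (ι → Bool)) (i : ι) (f : (ι → Bool) → M) :
    ∑ x ∈ s, f x = ∑ x ∈ s.filter (fun x => x i = true), f x +
      ∑ x ∈ s.filter (fun x => x i = false), f x := by
  rw [← sum_filter_add_sum_filter_not s (fun x => x i = true)]
  simp only [Bool.not_eq_true]

lemma sum_filter_split_apply₂ {M : Type*} [AddCommMonoid M]
    (s : Finset (ι → Bool)) (i j : ι) (f : (ι → Bool) → M) :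
    ∑ x ∈ s, f x =
      ∑ x ∈ s.filter (fun x => x i = true ∧ x j = true), f x +
      ∑ x ∈ s.filter (fun x => x i = true ∧ x j = false), f x +
      ∑ x ∈ s.filter (fun x => x i = false ∧ x j = true), f x +
      ∑ x ∈ s.filter (fun x => x i = false ∧ x j = false), f x := by
  rw [sum_filter_split_apply s i, sum_filter_split_apply (s.filter fun x => x i = true) j,
    sum_filter_split_apply (s.filter fun x => x i = false) j]
  simp only [filter_filter, add_assoc]

lemma card_filter_apply_eq_and_apply_eq [DecidableEq ι] [Fintype ι] {u v : ι} (huv : u ≠ v)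
    (a b : Bool) :
    #(univ.filter fun x : ι → Bool => x u = a ∧ x v = b) = 2 ^ (Fintype.card ι - 2) := by
  have hpi : (univ.filter fun x : ι → Bool => x u = a ∧ x v = b) =
      Fintype.piFinset
        (Function.update (Function.update (fun _ : ι => (univ : Finset Bool)) u {a}) v {b}) := by
    ext x
    simp only [mem_filter, mem_univ, true_and, Fintype.mem_piFinset]
    constructor
    · rintro ⟨rfl, rfl⟩ i
      rcases eq_or_ne i v with rfl | hv
      · simp
      rcases eq_or_ne i u with rfl | hu
      · simp [hv]
      · simp [hu, hv]
    · intro h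
      simpa [huv] using And.intro (h u) (h v)
  have huv' : u ∈ univ.erase v := mem_erase.2 ⟨huv, mem_univ u⟩
  have hrest : ∀ i ∈ (univ.erase v).erase u,
      #(Function.update (Function.update (fun _ => (univ : Finset Bool)) u {a}) v {b} i) = 2 := by
    intro i hi
    simp only [mem_erase] at hi
    simp [Function.update_of_ne hi.1, Function.update_of_ne hi.2.1]
  rw [hpi, Fintype.card_piFinset, ← prod_erase_mul _ _ (mem_univ v), ← prod_erase_mul _ _ huv',
    prod_congr rfl hrest, prod_const, card_erase_of_mem huv', card_erase_of_mem (mem_univ v),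
    card_univ, Nat.sub_sub]
  simp [Function.update_of_ne huv]

end SignMul

section Field

variable {d : ℕ} (β : Fin d → Fin d → ℝ)

lemma fld_signMul (g : Fin d → Bool) (ε : ℝ)
    (hg : ∀ i j, i ≠ j → β i j ≠ 0 → pm (g i) * pm (g j) = ε) (x : Fin d → Bool) :
    fld d β (signMul g x) = ε * fld d β x := by
  simp only [fld, mul_sum]
  refine sum_congr rfl fun i _ => sum_congr rfl fun j hj => ?_
  by_cases hβ : β i j = 0
  · simp [hβ]
  rw [pm_signMul, pm_signMul, ← hg i j (mem_Ioi.1 hj).ne hβ]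
  ring

lemma Sfun_eq_fld (u v : Fin d) :
    Sfun d β u v = fld d (fun k l => if s(k, l) = s(u, v) then 0 else β k l) := by
  funext x
  simp only [Sfun, fld, ite_mul, zero_mul]

lemma Sfun_signMul {u v : Fin d} (g : Fin d → Bool)
    (hg : ∀ i j, i ≠ j → β i j ≠ 0 → s(i, j) ≠ s(u, v) → g i = g j) (x : Fin d → Bool) :
    Sfun d β u v (signMul g x) = Sfun d β u v x := by
  rw [Sfun_eq_fld, fld_signMul _ g 1, one_mul]
  intro i j hij hβ
  split_ifs at hβ with hs
  · exact absurd rfl hβ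
  · exact pm_mul_pm_of_eq (hg i j hij hβ hs)

lemma fld_signMul_of_ne (τ : Fin d → Bool) (hτ : ∀ i j, i ≠ j → β i j ≠ 0 → τ i ≠ τ j)
    (x : Fin d → Bool) : fld d β (signMul τ x) = -fld d β x := by
  rw [fld_signMul β τ (-1) (fun i j hij hβ => pm_mul_pm_of_ne (hτ i j hij hβ)), neg_one_mul]

lemma fld_eq_mul_add_Sfun (hsymm : ∀ i j, β i j = β j i) {u v : Fin d} (huv : u ≠ v)
    (x : Fin d → Bool) : fld d β x = β u v * (pm (x u) * pm (x v)) + Sfun d β u v x := by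
  wlog hlt : u < v generalizing u v
  · rw [this huv.symm (huv.symm.lt_of_le (not_lt.1 hlt)), hsymm v u, mul_comm (pm (x v))]
    simp only [Sfun, Sym2.eq_swap (a := v) (b := u)]
  have hpair : ∀ k l, k < l → (s(k, l) = s(u, v) ↔ k = u ∧ l = v) := by
    intro k l hkl
    rw [Sym2.eq_iff]
    constructor
    · rintro (h | ⟨rfl, rfl⟩)
      · exact h
      · exact absurd (hkl.trans hlt) (lt_irrefl _)
    · exact Or.inl
  rw [← sub_eq_iff_eq_add]
  have hterm : ∀ k, ∀ l ∈ Ioi k, (β k l * pm (x k) * pm (x l) -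
      if s(k, l) = s(u, v) then 0 else β k l * pm (x k) * pm (x l)) =
        if k = u ∧ l = v then β k l * pm (x k) * pm (x l) else 0 := by
    intro k l hl
    simp only [hpair k l (mem_Ioi.1 hl)]
    split_ifs <;> ring
  simp only [fld, Sfun, ← sum_sub_distrib]
  rw [sum_congr rfl fun k _ => sum_congr rfl (hterm k)]
  simp [ite_and, hlt, mul_assoc]

end Field

section SignClass

variable {d : ℕ} {β : Fin d → Fin d → ℝ} {z u v w : Fin d}

variable (z u v w) in
def signClass (a b c e : Bool) : Finset (Fin d → Bool) :=
  univ.filter fun x => x z = a ∧ x u = b ∧ x v = c ∧ x w = e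

lemma sum_signClass_sigmoid_fld (hsymm : ∀ i j, β i j = β j i) (huv : u ≠ v) {g : Fin d → Bool}
    (hg : ∀ i j, i ≠ j → β i j ≠ 0 → s(i, j) ≠ s(u, v) → g i = g j)
    (hz : g z = true) (hu : g u = true) (hv : g v = false) (hw : g w = false) (a b c e : Bool) :
    ∑ x ∈ signClass z u v w a b c e, sigmoid (fld d β x) =
      ∑ x ∈ signClass z u v w (a == b) true true (e == c),
        sigmoid (β u v * (pm b * pm c) + Sfun d β u v x) := by
  -- multiply the component of `u` by the sign `b` and that of `v` by `c`
  set h : Fin d → Bool := fun i => if g i then b else c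
  have hh : ∀ i j, i ≠ j → β i j ≠ 0 → s(i, j) ≠ s(u, v) → h i = h j := by
    intro i j hij hβ hs
    simp only [h, hg i j hij hβ hs]
  rw [signClass, sum_filter_eq_sum_filter_signMul h]
  refine sum_congr ?_ fun x hx => ?_
  · ext x
    simp [signClass, signMul, h, hz, hu, hv, hw, beq_eq_iff_eq_beq]
  · simp only [signClass, mem_filter, mem_univ, true_and] at hx
    rw [fld_eq_mul_add_Sfun β hsymm huv, Sfun_signMul β h hh]
    simp [signMul, h, hu, hv, hx.2.1, hx.2.2.1]

lemma sum_filter_zw_sigmoid_fld (hsymm : ∀ i j, β i j = β j i) (huv : u ≠ v) {g : Fin d → Bool}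
    (hg : ∀ i j, i ≠ j → β i j ≠ 0 → s(i, j) ≠ s(u, v) → g i = g j)
    (hz : g z = true) (hu : g u = true) (hv : g v = false) (hw : g w = false) (a e : Bool) :
    ∑ x ∈ univ.filter (fun x => x z = a ∧ x w = e), sigmoid (fld d β x) =
      ∑ x ∈ signClass z u v w a true true e, sigmoid (β u v + Sfun d β u v x) +
      ∑ x ∈ signClass z u v w a true true (!e), sigmoid (-β u v + Sfun d β u v x) +
      ∑ x ∈ signClass z u v w (!a) true true e, sigmoid (-β u v + Sfun d β u v x) +
      ∑ x ∈ signClass z u v w (!a) true true (!e), sigmoid (β u v + Sfun d β u v x) := by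
  have hsplit : ∀ b c, (univ.filter fun x : Fin d → Bool =>
      (x z = a ∧ x w = e) ∧ x u = b ∧ x v = c) = signClass z u v w a b c e :=
    fun b c => filter_congr fun x _ => by tauto
  rw [sum_filter_split_apply₂ _ u v]
  simp only [filter_filter, hsplit]
  simp only [sum_signClass_sigmoid_fld hsymm huv hg hz hu hv hw]
  simp [pm, add_assoc]

lemma sum_filter_uv_sigmoid_fld (hsymm : ∀ i j, β i j = β j i) (huv : u ≠ v) :
    ∑ x ∈ univ.filter (fun x => x u = true ∧ x v = true), sigmoid (fld d β x) =
      ∑ x ∈ signClass z u v w true true true true, sigmoid (β u v + Sfun d β u v x) +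
      ∑ x ∈ signClass z u v w true true true false, sigmoid (β u v + Sfun d β u v x) +
      ∑ x ∈ signClass z u v w false true true true, sigmoid (β u v + Sfun d β u v x) +
      ∑ x ∈ signClass z u v w false true true false, sigmoid (β u v + Sfun d β u v x) := by
  have hsplit : ∀ a e, (univ.filter fun x : Fin d → Bool =>
      (x u = true ∧ x v = true) ∧ x z = a ∧ x w = e) = signClass z u v w a true true e :=
    fun a e => filter_congr fun x _ => by tauto
  have hclass : ∀ a e, ∑ x ∈ signClass z u v w a true true e, sigmoid (fld d β x) =
      ∑ x ∈ signClass z u v w a true true e, sigmoid (β u v + Sfun d β u v x) := by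
    intro a e
    refine sum_congr rfl fun x hx => ?_
    simp only [signClass, mem_filter, mem_univ, true_and] at hx
    rw [fld_eq_mul_add_Sfun β hsymm huv, hx.2.1, hx.2.2.1]
    simp [pm]
  rw [sum_filter_split_apply₂ _ z w]
  simp only [filter_filter, hsplit, hclass]

lemma sum_filter_zw_sigmoid_neg_fld {τ : Fin d → Bool}
    (hτ : ∀ i j, i ≠ j → β i j ≠ 0 → τ i ≠ τ j) (hz : τ z = true) (hw : τ w = false) (a e : Bool) :
    ∑ x ∈ univ.filter (fun x => x z = a ∧ x w = e), sigmoid (-fld d β x) =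
      ∑ x ∈ univ.filter (fun x => x z = a ∧ x w = !e), sigmoid (fld d β x) := by
  rw [sum_filter_eq_sum_filter_signMul τ]
  refine sum_congr ?_ fun x _ => by rw [fld_signMul_of_ne β τ hτ, neg_neg]
  ext x
  simp [signMul, hz, hw]

end SignClass

lemma two_zpow_mul_condProbY {d : ℕ} (β : Fin d → Fin d → ℝ) {u v : Fin d} (huv : u ≠ v)
    (s : ℝ) :
    (2 : ℝ) ^ ((d : ℤ) - 2) * condProbY d β s (univ.filter fun x => x u = true ∧ x v = true) =
      ∑ x ∈ univ.filter (fun x => x u = true ∧ x v = true), sigmoid (s * fld d β x) := by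
  have hd : 2 ≤ d := Fin.nontrivial_iff_two_le.1 ⟨u, v, huv⟩
  have hpow : (2 : ℝ) ^ ((d : ℤ) - 2) = ((2 ^ (d - 2) : ℕ) : ℝ) := by
    rw [Nat.cast_pow, ← zpow_natCast, Nat.cast_sub hd]
    norm_num
  rw [condProbY, card_filter_apply_eq_and_apply_eq huv, Fintype.card_fin, hpow,
    mul_div_cancel₀ _ (by positivity)]

lemma interGraph_adj_of_ne_zero {d : ℕ} {β : Fin d → Fin d → ℝ} {i j : Fin d} (hij : i ≠ j)
    (hβ : β i j ≠ 0) : (interGraph d β).Adj i j :=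
  SimpleGraph.fromRel_adj _ _ _ |>.2 ⟨hij, Or.inl hβ⟩

namespace SimpleGraph

variable {V : Type*} {G : SimpleGraph V} {m : ℕ} {p : Fin (m + 1) → V}

lemma reachable_of_forall_adj_castSucc_succ {i j : Fin (m + 1)} (hij : i ≤ j)
    (hp : ∀ l : Fin m, i ≤ l.castSucc → l.succ ≤ j → G.Adj (p l.castSucc) (p l.succ)) :
    G.Reachable (p i) (p j) := by
  induction j using Fin.induction with
  | zero => rw [Fin.le_zero_iff.1 hij]
  | succ l ih =>
    rcases hij.eq_or_lt with rfl | hlt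
    · rfl
    have hil : i ≤ l.castSucc := Fin.le_castSucc_iff.2 hlt
    exact (ih hil fun l' h₁ h₂ => hp l' h₁ (h₂.trans (Fin.castSucc_lt_succ (i := l)).le)).trans
      (hp l hil le_rfl).reachable

lemma Coloring.eq_iff_even_of_forall_adj (c : G.Coloring Bool)
    (hp : ∀ l : Fin m, G.Adj (p l.castSucc) (p l.succ)) (j : Fin (m + 1)) :
    c (p j) = c (p 0) ↔ Even (j : ℕ) := by
  induction j using Fin.induction with
  | zero => simp
  | succ l ih =>
    have hne := c.valid (hp l)
    rw [Fin.val_succ, Nat.even_add_one, ← Fin.val_castSucc, ← ih]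
    revert hne
    cases c (p l.succ) <;> cases c (p l.castSucc) <;> cases c (p 0) <;> simp

lemma IsAcyclic.exists_sign_split (hG : G.IsAcyclic) (hinj : Function.Injective p)
    (hp : ∀ l : Fin m, G.Adj (p l.castSucc) (p l.succ)) (k : Fin m) :
    ∃ g : V → Bool, (∀ i j, (G.deleteEdges {s(p k.castSucc, p k.succ)}).Adj i j → g i = g j) ∧
      g (p 0) = true ∧ g (p k.castSucc) = true ∧ g (p k.succ) = false ∧
      g (p (Fin.last m)) = false := by
  classical
  set G' := G.deleteEdges {s(p k.castSucc, p k.succ)}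
  have hadj : ∀ l ≠ k, G'.Adj (p l.castSucc) (p l.succ) := by
    intro l hl
    refine deleteEdges_adj.2 ⟨hp l, ?_⟩
    have hl' : (l : ℕ) ≠ k := Fin.val_ne_of_ne hl
    simp only [Set.mem_singleton_iff, Sym2.eq_iff, hinj.eq_iff, Fin.ext_iff, Fin.val_castSucc,
      Fin.val_succ]
    omega
  have hbridge : ¬ G'.Reachable (p k.castSucc) (p k.succ) :=
    isBridge_iff.1 (isAcyclic_iff_forall_adj_isBridge.1 hG (hp k))
  have hz : G'.Reachable (p 0) (p k.castSucc) :=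
    reachable_of_forall_adj_castSucc_succ (Fin.zero_le _) fun l _ hl =>
      hadj l fun hlk => by subst hlk; exact (Fin.castSucc_lt_succ (i := l)).not_ge hl
  have hw : G'.Reachable (p k.succ) (p (Fin.last m)) :=
    reachable_of_forall_adj_castSucc_succ (Fin.le_last _) fun l hl _ =>
      hadj l fun hlk => by subst hlk; exact (Fin.castSucc_lt_succ (i := l)).not_ge hl
  refine ⟨fun i => decide (G'.Reachable (p k.castSucc) i), fun i j hij => ?_, ?_, ?_, ?_, ?_⟩
  · exact decide_eq_decide.2 ⟨fun h => h.trans hij.reachable, fun h => h.trans hij.symm.reachable⟩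
  · simpa using hz.symm
  · simp
  · simpa using hbridge
  · simpa using fun h => hbridge (h.trans hw.symm)

lemma IsAcyclic.exists_sign_coloring (hG : G.IsAcyclic)
    (hp : ∀ l : Fin m, G.Adj (p l.castSucc) (p l.succ)) (hm : Odd m) :
    ∃ τ : V → Bool, (∀ i j, G.Adj i j → τ i ≠ τ j) ∧ τ (p 0) = true ∧
      τ (p (Fin.last m)) = false := by
  let c : G.Coloring Bool := recolorOfEquiv G finTwoEquiv hG.coloringTwo
  have hlast : c (p (Fin.last m)) ≠ c (p 0) := by
    rw [Ne, c.eq_iff_even_of_forall_adj hp, Fin.val_last, Nat.not_even_iff_odd]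
    exact hm
  exact ⟨fun i => c i == c (p 0), fun i j hij => beq_ne_beq (c.valid hij) _, by simp,
    by simpa using hlast⟩

end SimpleGraph

theorem statement18_general (d m : ℕ) (β : Fin d → Fin d → ℝ)
    (hsymm : ∀ i j, β i j = β j i)
    (hacyc : (interGraph d β).IsAcyclic)
    (p : Fin (m + 1) → Fin d) (hinj : Function.Injective p)
    (hedge : ∀ k : Fin m, β (p k.castSucc) (p k.succ) ≠ 0)
    (k : Fin m) :
    ((2 : ℝ) ^ ((d : ℤ) - 2) *
        (condProbY d β 1
            (Finset.univ.filter (fun x => x (p k.castSucc) = true ∧ x (p k.succ) = true)) -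
          condProbY d β 1
            (Finset.univ.filter (fun x => x (p 0) = true ∧ x (p (Fin.last m)) = true))) =
      (∑ x ∈ Finset.univ.filter (fun x : Fin d → Bool =>
          x (p 0) = true ∧ x (p k.castSucc) = true ∧ x (p k.succ) = true ∧
            x (p (Fin.last m)) = false),
          zeta d β (p k.castSucc) (p k.succ) x) +
      (∑ x ∈ Finset.univ.filter (fun x : Fin d → Bool =>
          x (p 0) = false ∧ x (p k.castSucc) = true ∧ x (p k.succ) = true ∧
            x (p (Fin.last m)) = true),
          zeta d β (p k.castSucc) (p k.succ) x)) ∧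
    (Odd m →
      (2 : ℝ) ^ ((d : ℤ) - 2) *
          (condProbY d β 1
              (Finset.univ.filter (fun x => x (p k.castSucc) = true ∧ x (p k.succ) = true)) -
            condProbY d β (-1)
              (Finset.univ.filter (fun x => x (p 0) = true ∧ x (p (Fin.last m)) = true))) =
        (∑ x ∈ Finset.univ.filter (fun x : Fin d → Bool =>
            x (p 0) = true ∧ x (p k.castSucc) = true ∧ x (p k.succ) = true ∧
              x (p (Fin.last m)) = true),
            zeta d β (p k.castSucc) (p k.succ) x) +
        (∑ x ∈ Finset.univ.filter (fun x : Fin d → Bool =>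
            x (p 0) = false ∧ x (p k.castSucc) = true ∧ x (p k.succ) = true ∧
              x (p (Fin.last m)) = false),
            zeta d β (p k.castSucc) (p k.succ) x)) := by
  have hpath : ∀ l : Fin m, (interGraph d β).Adj (p l.castSucc) (p l.succ) := fun l =>
    interGraph_adj_of_ne_zero (hinj.ne (Fin.castSucc_lt_succ (i := l)).ne) (hedge l)
  have huv : p k.castSucc ≠ p k.succ := hinj.ne (Fin.castSucc_lt_succ (i := k)).ne
  have hzw : p 0 ≠ p (Fin.last m) := hinj.ne (Fin.ne_of_val_ne (by simpa using k.pos.ne))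
  obtain ⟨g, hg, hz, hu, hv, hw⟩ := hacyc.exists_sign_split hinj hpath k
  have hg' : ∀ i j, i ≠ j → β i j ≠ 0 → s(i, j) ≠ s(p k.castSucc, p k.succ) → g i = g j :=
    fun i j hij hβ hs =>
      hg i j (SimpleGraph.deleteEdges_adj.2 ⟨interGraph_adj_of_ne_zero hij hβ, hs⟩)
  simp only [mul_sub, two_zpow_mul_condProbY β huv, two_zpow_mul_condProbY β hzw, one_mul,
    neg_one_mul, zeta, sum_sub_distrib]
  rw [sum_filter_uv_sigmoid_fld (z := p 0) (w := p (Fin.last m)) hsymm huv]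
  constructor
  · rw [sum_filter_zw_sigmoid_fld hsymm huv hg' hz hu hv hw]
    simp only [signClass, Bool.not_true]
    ring
  · intro hm
    obtain ⟨τ, hτ, hτz, hτw⟩ := hacyc.exists_sign_coloring hpath hm
    rw [sum_filter_zw_sigmoid_neg_fld (fun i j hij hβ => hτ i j (interGraph_adj_of_ne_zero hij hβ))
      hτz hτw, sum_filter_zw_sigmoid_fld hsymm huv hg' hz hu hv hw]
    simp only [signClass, Bool.not_true, Bool.not_false]
    ring

/-- Lemma 5: let the interaction graph be acyclic, let
`{i_1,i_2},…,{i_m,i_{m+1}}` be a path of length `m ≥ 3` in it (the vertices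
`i_1,…,i_{m+1}` are `p 0, …, p m`), and let `s ∈ {2,…,m−1}` index an interior edge
`{i_s, i_{s+1}}` (in `0`-based form, the edge `{p k, p (k+1)}` with `1 ≤ k ≤ m−2`).  Then
(a) `2^{d−2}·[Pr(y=+1|x_{i_s}=+1,x_{i_{s+1}}=+1) − Pr(y=+1|x_{i_1}=+1,x_{i_{m+1}}=+1)]`
equals the sum of `ζ_{{i_s,i_{s+1}}}(x)` over `x` with
`(x_{i_1},x_{i_s},x_{i_{s+1}},x_{i_{m+1}}) = (+1,+1,+1,−1)` plus the sum over
`(−1,+1,+1,+1)`; and (b) if `m` is odd,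
`2^{d−2}·[Pr(y=+1|x_{i_s}=+1,x_{i_{s+1}}=+1) − Pr(y=−1|x_{i_1}=+1,x_{i_{m+1}}=+1)]`
equals the sum over `(+1,+1,+1,+1)` plus the sum over `(−1,+1,+1,−1)`. -/
theorem statement18 (d m : ℕ) (hd : 2 ≤ d) (hm : 3 ≤ m) (β : Fin d → Fin d → ℝ)
    (hsymm : ∀ i j, β i j = β j i)
    (hacyc : (interGraph d β).IsAcyclic)
    (p : Fin (m + 1) → Fin d) (hinj : Function.Injective p)
    (hedge : ∀ k : Fin m, β (p k.castSucc) (p k.succ) ≠ 0)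
    (k : Fin m) (hk₁ : 1 ≤ (k : ℕ)) (hk₂ : (k : ℕ) + 1 < m) :
    ((2 : ℝ) ^ ((d : ℤ) - 2) *
        (condProbY d β 1
            (Finset.univ.filter (fun x => x (p k.castSucc) = true ∧ x (p k.succ) = true)) -
          condProbY d β 1
            (Finset.univ.filter (fun x => x (p 0) = true ∧ x (p (Fin.last m)) = true))) =
      (∑ x ∈ Finset.univ.filter (fun x : Fin d → Bool =>
          x (p 0) = true ∧ x (p k.castSucc) = true ∧ x (p k.succ) = true ∧
            x (p (Fin.last m)) = false),
          zeta d β (p k.castSucc) (p k.succ) x) +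
      (∑ x ∈ Finset.univ.filter (fun x : Fin d → Bool =>
          x (p 0) = false ∧ x (p k.castSucc) = true ∧ x (p k.succ) = true ∧
            x (p (Fin.last m)) = true),
          zeta d β (p k.castSucc) (p k.succ) x)) ∧
    (Odd m →
      (2 : ℝ) ^ ((d : ℤ) - 2) *
          (condProbY d β 1
              (Finset.univ.filter (fun x => x (p k.castSucc) = true ∧ x (p k.succ) = true)) -
            condProbY d β (-1)
              (Finset.univ.filter (fun x => x (p 0) = true ∧ x (p (Fin.last m)) = true))) =
        (∑ x ∈ Finset.univ.filter (fun x : Fin d → Bool =>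
            x (p 0) = true ∧ x (p k.castSucc) = true ∧ x (p k.succ) = true ∧
              x (p (Fin.last m)) = true),
            zeta d β (p k.castSucc) (p k.succ) x) +
        (∑ x ∈ Finset.univ.filter (fun x : Fin d → Bool =>
            x (p 0) = false ∧ x (p k.castSucc) = true ∧ x (p k.succ) = true ∧
              x (p (Fin.last m)) = false),
            zeta d β (p k.castSucc) (p k.succ) x)) :=
  statement18_general d m β hsymm hacyc p hinj hedge k
end

section
/- In the model with individual effects and pairwise interactions, for any two distinct i, j ∈ V the auxiliary-model weight satisfies w̃_{{i,j}} = |Pr(y = +1 | x_i = +1, x_j = +1) + Pr(y = +1 | x_i = −1, x_j = −1) − 1|. Equivalently, Pr(ỹ = +1 | x_i = +1, x_j = +1) = (1/2)·Pr(y = +1 | x_i = +1, x_j = +1) + (1/2)·Pr(y = +1 | x_i = −1, x_j = −1). -/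
open Finset

/-- The exponent `Σ_{i∈V} β_i x_i + Σ_{{i,j}∈E} β_{{i,j}} x_i x_j` of the model with both
individual effects and pairwise interactions. -/
noncomputable def fldInd (d : ℕ) (β₀ : Fin d → ℝ) (β : Fin d → Fin d → ℝ)
    (x : Fin d → Bool) : ℝ :=
  (∑ i : Fin d, β₀ i * pm (x i)) + fld d β x

/-- The exponent `Σ_{{i,j}∈Ẽ} β_{{i,j}} x_i x_j = x_0·Σ_{i∈V} β_i x_i + Σ_{{i,j}∈E} β_{{i,j}} x_i x_j`
of the auxiliary model with the extra covariate `x_0` (here denoted `x₀`). -/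
noncomputable def fldAux (d : ℕ) (β₀ : Fin d → ℝ) (β : Fin d → Fin d → ℝ)
    (x : Fin d → Bool) (x₀ : Bool) : ℝ :=
  pm x₀ * (∑ i : Fin d, β₀ i * pm (x i)) + fld d β x

/-- `Pr(y = +1 | x_V ∈ A)` in the model with individual effects and pairwise interactions. -/
noncomputable def condProbInd (d : ℕ) (β₀ : Fin d → ℝ) (β : Fin d → Fin d → ℝ)
    (A : Finset (Fin d → Bool)) : ℝ :=
  (∑ x ∈ A, sigmoid (fldInd d β₀ β x)) / A.card

/-- `Pr(ỹ = +1 | (x_V, x_0) ∈ A)` in the auxiliary model (the extra covariate `x_0` is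
uniform on `{−1,+1}` and independent of `x_V`). -/
noncomputable def condProbAux (d : ℕ) (β₀ : Fin d → ℝ) (β : Fin d → Fin d → ℝ)
    (A : Finset ((Fin d → Bool) × Bool)) : ℝ :=
  (∑ z ∈ A, sigmoid (fldAux d β₀ β z.1 z.2)) / A.card

/-- The auxiliary-model weight `w̃_{{i,j}} = |2·Pr(ỹ = +1 | x_i = +1, x_j = +1) − 1|`. -/
noncomputable def wtilde (d : ℕ) (β₀ : Fin d → ℝ) (β : Fin d → Fin d → ℝ)
    (i j : Fin d) : ℝ :=
  |2 * condProbAux d β₀ β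
      (Finset.univ.filter (fun z : (Fin d → Bool) × Bool =>
        z.1 i = true ∧ z.1 j = true)) - 1|

/-!
Conditioning the auxiliary model on `x_i = x_j = +1` averages over `x₀ = ±1`. For `x₀ = +1` its
exponent is that of the original model at `x`; for `x₀ = -1` it is that of the original model at
`-x`, because the pairwise terms are even and the individual terms odd in `x`. Negating all
covariates maps `{x_i = x_j = +1}` bijectively onto `{x_i = x_j = -1}`, which gives the average
of the two conditional probabilities of the original model.
-/

def negAll (ι : Type*) : Equiv.Perm (ι → Bool) := Equiv.piCongrRight fun _ => Equiv.boolNot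

@[simp]
lemma negAll_apply {ι : Type*} (x : ι → Bool) (k : ι) : negAll ι x k = !x k := rfl

lemma pm_not (b : Bool) : pm (!b) = -pm b := by cases b <;> simp [pm]

lemma fld_negAll (d : ℕ) (β : Fin d → Fin d → ℝ) (x : Fin d → Bool) :
    fld d β (negAll _ x) = fld d β x := by
  simp only [fld, negAll_apply, pm_not, mul_neg, neg_mul, neg_neg]

lemma fldAux_true (d : ℕ) (β₀ : Fin d → ℝ) (β : Fin d → Fin d → ℝ) (x : Fin d → Bool) :
    fldAux d β₀ β x true = fldInd d β₀ β x := by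
  simp [fldAux, fldInd, pm]

lemma fldAux_false (d : ℕ) (β₀ : Fin d → ℝ) (β : Fin d → Fin d → ℝ) (x : Fin d → Bool) :
    fldAux d β₀ β x false = fldInd d β₀ β (negAll _ x) := by
  have hpm_false : pm false = -1 := rfl
  simp only [fldAux, fldInd, fld_negAll, negAll_apply, pm_not, hpm_false, mul_neg, neg_one_mul,
    ← sum_neg_distrib]

lemma condProbAux_product_univ (d : ℕ) (β₀ : Fin d → ℝ) (β : Fin d → Fin d → ℝ)
    (A : Finset (Fin d → Bool)) :
    condProbAux d β₀ β (A ×ˢ univ) =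
      (1 / 2) * condProbInd d β₀ β A +
        (1 / 2) * condProbInd d β₀ β (A.map (negAll _).toEmbedding) := by
  have hsum : ∑ z ∈ A ×ˢ univ, sigmoid (fldAux d β₀ β z.1 z.2) =
      ∑ x ∈ A, sigmoid (fldInd d β₀ β x) +
        ∑ x ∈ A.map (negAll _).toEmbedding, sigmoid (fldInd d β₀ β x) := by
    rw [sum_product, sum_map, ← sum_add_distrib]
    refine sum_congr rfl fun x _ => ?_
    simp [fldAux_true, fldAux_false]
  rw [condProbAux, condProbInd, condProbInd, hsum, card_product, card_map, Finset.card_univ,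
    Fintype.card_bool]
  push_cast
  ring

lemma map_negAll_filter_eq_true (d : ℕ) (i j : Fin d) :
    (univ.filter fun x : Fin d → Bool => x i = true ∧ x j = true).map (negAll _).toEmbedding =
      univ.filter fun x : Fin d → Bool => x i = false ∧ x j = false := by
  ext x
  simp [mem_map_equiv, negAll]

theorem statement19_general (d : ℕ) (β₀ : Fin d → ℝ) (β : Fin d → Fin d → ℝ)
    (i j : Fin d) :
    wtilde d β₀ β i j =
      |condProbInd d β₀ β
          (Finset.univ.filter (fun x : Fin d → Bool => x i = true ∧ x j = true)) +
        condProbInd d β₀ β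
          (Finset.univ.filter (fun x : Fin d → Bool => x i = false ∧ x j = false)) - 1| ∧
    condProbAux d β₀ β
        (Finset.univ.filter (fun z : (Fin d → Bool) × Bool =>
          z.1 i = true ∧ z.1 j = true)) =
      (1 / 2) * condProbInd d β₀ β
          (Finset.univ.filter (fun x : Fin d → Bool => x i = true ∧ x j = true)) +
      (1 / 2) * condProbInd d β₀ β
          (Finset.univ.filter (fun x : Fin d → Bool => x i = false ∧ x j = false)) := by
  have hfilter : (univ.filter fun z : (Fin d → Bool) × Bool => z.1 i = true ∧ z.1 j = true) =
      (univ.filter fun x : Fin d → Bool => x i = true ∧ x j = true) ×ˢ univ := by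
    ext z
    simp
  have key := condProbAux_product_univ d β₀ β
    (univ.filter fun x : Fin d → Bool => x i = true ∧ x j = true)
  rw [map_negAll_filter_eq_true, ← hfilter] at key
  refine ⟨?_, key⟩
  rw [wtilde, key]
  congr 1
  ring

/-- Section IV: in the model with individual effects and pairwise
interactions, for any two distinct `i, j ∈ V` the auxiliary-model weight satisfies
`w̃_{{i,j}} = |Pr(y=+1|x_i=+1,x_j=+1) + Pr(y=+1|x_i=−1,x_j=−1) − 1|`; equivalently,
`Pr(ỹ=+1|x_i=+1,x_j=+1) = ½·Pr(y=+1|x_i=+1,x_j=+1) + ½·Pr(y=+1|x_i=−1,x_j=−1)`. -/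
theorem statement19 (d : ℕ) (hd : 2 ≤ d) (β₀ : Fin d → ℝ) (β : Fin d → Fin d → ℝ)
    (hsymm : ∀ i j, β i j = β j i)
    (i j : Fin d) (hij : i ≠ j) :
    wtilde d β₀ β i j =
      |condProbInd d β₀ β
          (Finset.univ.filter (fun x : Fin d → Bool => x i = true ∧ x j = true)) +
        condProbInd d β₀ β
          (Finset.univ.filter (fun x : Fin d → Bool => x i = false ∧ x j = false)) - 1| ∧
    condProbAux d β₀ β
        (Finset.univ.filter (fun z : (Fin d → Bool) × Bool =>
          z.1 i = true ∧ z.1 j = true)) =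
      (1 / 2) * condProbInd d β₀ β
          (Finset.univ.filter (fun x : Fin d → Bool => x i = true ∧ x j = true)) +
      (1 / 2) * condProbInd d β₀ β
          (Finset.univ.filter (fun x : Fin d → Bool => x i = false ∧ x j = false)) :=
  statement19_general d β₀ β i j
end
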